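/- Fix integers k, h with 1 ≤ h < k. Assume there exists ρ > 0 with lim_{n→∞} p(k−h,n,⌊ρn⌋) = 1 and there exists ρ' > 0 with lim_{n→∞} p(k−h,n,⌊ρ'n⌋) = 0. Then there exist reals s > 0 and r > 0 such that lim_{E→∞} q^gctd(h,k−h,⌊s·E^{1/h}⌋,E) = 1 and lim_{E→∞} q^gctd(h,k−h,⌊r·E^{1/h}⌋,E) = 0. -/

import Mathlib

open Filter

/-- A `k`-clause over `n` propositional variables: a set of `k` literals
(pairs of a variable and a sign) over `k` distinct variables. -/
def Clause (n k : ℕ) : Type :=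
  {C : Finset (Fin n × Bool) // C.card = k ∧ (C.image Prod.fst).card = k}

/-- An assignment `σ` satisfies a clause if it agrees with the clause's sign
on at least one variable of the clause. -/
def ClauseSat {n k : ℕ} (σ : Fin n → Bool) (C : Clause n k) : Prop :=
  ∃ l ∈ C.val, σ l.1 = l.2

/-- A `k`-CNF formula with `m` clauses (an `m`-tuple of `k`-clauses) is
satisfiable if some assignment satisfies all of its clauses. -/
def CNFSat {n k m : ℕ} (F : Fin m → Clause n k) : Prop :=
  ∃ σ : Fin n → Bool, ∀ i, ClauseSat σ (F i)

/-- `pSat k n m` is the fraction of the `m`-tuples of `k`-clauses over an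
`n`-element variable set that are satisfiable. -/
noncomputable def pSat (k n m : ℕ) : ℝ :=
  (Nat.card {F : Fin m → Clause n k // CNFSat F} : ℝ) /
    (Nat.card (Fin m → Clause n k) : ℝ)

/-- A set of `h` literals over `h` distinct variables among `A` universal
variables. There are `2^h·binom(A,h)` such sets. -/
def HLitSet (A h : ℕ) : Type :=
  {L : Finset (Fin A × Bool) // L.card = h ∧ (L.image Prod.fst).card = h}

/-- A generalized controlled instance over `A` universal and `E` existential
variables: a function assigning to each `h`-literal set `L` over the universal
variables a `c`-clause `g(L)` over the existential variables. (For `k`-clauses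
in the matrix, take `c = k - h`.) Its matrix consists of the clauses
`(⋁L) ∨ g(L)`. -/
def GCtdInst (A E h c : ℕ) : Type := HLitSet A h → Clause E c

/-- The QBF `∀X∃Y` of the matrix of a generalized controlled instance `g` is
true: for every assignment `I` of the universal variables there is an
assignment `J` of the existential variables satisfying at least one literal of
every clause `(⋁L) ∨ g(L)` of the matrix. -/
def GCtdTrue {A E h c : ℕ} (g : GCtdInst A E h c) : Prop :=
  ∀ I : Fin A → Bool, ∃ J : Fin E → Bool, ∀ L : HLitSet A h,
    (∃ l ∈ L.val, I l.1 = l.2) ∨ ∃ p ∈ (g L).val, J p.1 = p.2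

/-- `q^gctd(h,c,A,E)`: the fraction of generalized controlled instances `g`
for which the QBF `∀X∃Y` of the matrix of `g` is true. -/
noncomputable def qGCtd (h c A E : ℕ) : ℝ :=
  (Nat.card {g : GCtdInst A E h c // GCtdTrue g} : ℝ) /
    (Nat.card (GCtdInst A E h c) : ℝ)

/-!
Both limits are reduced to the random `(k-h)`-CNF thresholds by comparing `q^gctd` with `p`.
From below: if the `2^h·binom(A,h)` existential clauses `g(L)` are satisfiable together, the QBF
is true, so `p(k-h, E, 2^h·binom(A,h)) ≤ q^gctd(h, k-h, A, E)`. From above: under the all-false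
universal assignment every clause whose literal set `L` is all-positive reduces to `g(L)`, so a
true QBF makes these `binom(A,h)` clauses satisfiable together and
`q^gctd(h, k-h, A, E) ≤ p(k-h, E, binom(A,h))`. Since `p` is antitone in the number of clauses and
both `binom(A,h)` and `2^h·binom(A,h)` are of order `A^h`, taking `A` of order `E^{1/h}` turns
the thresholds at `ρE` and `ρ'E` into the claimed ones.
-/

instance (n k : ℕ) : Fintype (Clause n k) := by
  unfold Clause; infer_instance

instance (A h : ℕ) : Fintype (HLitSet A h) := by
  unfold HLitSet; infer_instance

instance (A E h c : ℕ) : Finite (GCtdInst A E h c) := Pi.finite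

theorem natCast_div_le_natCast_div_of_le_mul {a a' b t : ℕ} (h : a' ≤ a * t) :
    (a' : ℝ) / (b * t : ℕ) ≤ a / b := by
  rcases Nat.eq_zero_or_pos t with rfl | ht
  · simp only [mul_zero, nonpos_iff_eq_zero] at h
    simp only [h, Nat.cast_zero, zero_div]
    positivity
  calc (a' : ℝ) / (b * t : ℕ) ≤ (a * t : ℕ) / (b * t : ℕ) := by gcongr
    _ = a / b := by push_cast; exact mul_div_mul_right _ _ (by positivity)

theorem card_subtype_div_le_of_comp {ι κ α : Type*} [Finite κ] [Finite α] (f : ι ↪ κ)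
    {P : (κ → α) → Prop} {Q : (ι → α) → Prop} (hPQ : ∀ F, P F → Q (F ∘ f)) :
    (Nat.card {F // P F} : ℝ) / Nat.card (κ → α) ≤
      (Nat.card {G // Q G} : ℝ) / Nat.card (ι → α) := by
  classical
  have : Finite ι := Finite.of_injective f f.injective
  let R := {y // y ∉ Set.range f}
  have hκ : Nat.card κ = Nat.card ι + Nat.card R := by
    rw [← Nat.card_congr (Equiv.sumCompl (· ∈ Set.range f)), Nat.card_sum,
      Nat.card_congr (Equiv.ofInjective f f.injective)]
  have hinj : Function.Injective
      fun F : {F // P F} => ((⟨F.1 ∘ f, hPQ F.1 F.2⟩ : {G // Q G}), fun y : R => F.1 y) := by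
    rintro ⟨F, _⟩ ⟨F', _⟩ hFF'
    simp only [Prod.mk.injEq, Subtype.mk.injEq] at hFF'
    ext y
    by_cases hy : y ∈ Set.range f
    · obtain ⟨x, rfl⟩ := hy
      exact congrFun hFF'.1 x
    · exact congrFun hFF'.2 ⟨y, hy⟩
  have hcard := Nat.card_le_card_of_injective _ hinj
  rw [Nat.card_prod] at hcard
  rw [Nat.card_fun, hκ, pow_add, ← Nat.card_fun, ← Nat.card_fun]
  exact natCast_div_le_natCast_div_of_le_mul hcard

theorem pSat_antitone (k n : ℕ) : Antitone (pSat k n) :=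
  fun _ _ hm => card_subtype_div_le_of_comp (Fin.castLEEmb hm) fun _ ⟨σ, hσ⟩ => ⟨σ, fun _ => hσ _⟩

theorem pSat_card_hLitSet_le_qGCtd (h c A E : ℕ) :
    pSat c E (Nat.card (HLitSet A h)) ≤ qGCtd h c A E :=
  card_subtype_div_le_of_comp (Finite.equivFin (HLitSet A h)).toEmbedding
    fun _ ⟨J, hJ⟩ _ => ⟨J, fun _ => Or.inr (hJ _)⟩

theorem image_fst_map_sectL {α β : Type*} [DecidableEq α] (S : Finset α) (b : β) :
    (S.map (Function.Embedding.sectL α b)).image Prod.fst = S := by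
  ext; simp

def positiveLits (A h : ℕ) : {S : Finset (Fin A) // S.card = h} ↪ HLitSet A h where
  toFun S := ⟨S.1.map (Function.Embedding.sectL _ true), by
    simp only [Finset.card_map, image_fst_map_sectL, S.2, and_self]⟩
  inj' S S' hSS' := by
    have := congrArg (fun L : HLitSet A h => L.1.image Prod.fst) hSS'
    simpa only [image_fst_map_sectL, Subtype.ext_iff] using this

theorem mem_positiveLits {A h : ℕ} {S : {S : Finset (Fin A) // S.card = h}} {l : Fin A × Bool} :
    l ∈ (positiveLits A h S).1 ↔ l.1 ∈ S.1 ∧ l.2 = true := by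
  show l ∈ S.1.map _ ↔ _
  obtain ⟨v, b⟩ := l
  simp [eq_comm]

theorem qGCtd_le_pSat_choose (h c A E : ℕ) : qGCtd h c A E ≤ pSat c E (A.choose h) := by
  let e : Fin (A.choose h) ≃ {S : Finset (Fin A) // S.card = h} :=
    (Fintype.equivFinOfCardEq (by simp)).symm
  refine card_subtype_div_le_of_comp (e.toEmbedding.trans (positiveLits A h)) fun g hg => ?_
  obtain ⟨J, hJ⟩ := hg fun _ => false
  refine ⟨J, fun i => (hJ _).resolve_left ?_⟩
  rintro ⟨l, hl, hIl⟩
  exact Bool.false_ne_true (hIl.trans (mem_positiveLits.1 hl).2)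

theorem card_hLitSet_le (A h : ℕ) : Nat.card (HLitSet A h) ≤ (2 * A) ^ h := by
  calc Nat.card (HLitSet A h) ≤ Nat.card {C : Finset (Fin A × Bool) // C.card = h} :=
        Nat.card_le_card_of_injective (fun L => ⟨L.1, L.2.1⟩)
          fun _ _ hLL' => Subtype.ext (Subtype.mk.inj hLL')
    _ = (2 * A).choose h := by simp [mul_comm]
    _ ≤ (2 * A) ^ h := Nat.choose_le_pow _ _

theorem qGCtd_nonneg (h c A E : ℕ) : 0 ≤ qGCtd h c A E := by
  unfold qGCtd; positivity

theorem qGCtd_le_one (h c A E : ℕ) : qGCtd h c A E ≤ 1 :=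
  div_le_one_of_le₀ (mod_cast Nat.card_le_card_of_injective _ Subtype.val_injective)
    (Nat.cast_nonneg _)

theorem card_hLitSet_floor_le (h : ℕ) {c x : ℝ} (hc : 0 ≤ c) (hx : 0 ≤ x) :
    Nat.card (HLitSet ⌊c * x⌋₊ h) ≤ ⌊(2 * c) ^ h * x ^ h⌋₊ := by
  refine Nat.le_floor ?_
  calc (Nat.card (HLitSet ⌊c * x⌋₊ h) : ℝ) ≤ (2 * ⌊c * x⌋₊ : ℕ) ^ h :=
        mod_cast card_hLitSet_le _ _
    _ ≤ (2 * (c * x)) ^ h := by push_cast; gcongr; exact Nat.floor_le (by positivity)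
    _ = (2 * c) ^ h * x ^ h := by ring

theorem floor_le_choose_floor {h : ℕ} {ρ d x : ℝ} (hd : 0 ≤ d) (hρd : h.factorial * ρ ≤ d ^ h)
    (hx : 1 ≤ x) : ⌊ρ * x ^ h⌋₊ ≤ (⌊(h + d) * x⌋₊).choose h := by
  set A := ⌊(h + d) * x⌋₊
  have hdx : 0 ≤ d * x := by positivity
  have hA : (h : ℝ) + d * x < A + 1 := calc
    (h : ℝ) + d * x ≤ (h + d) * x := by nlinarith
    _ < A + 1 := Nat.lt_floor_add_one _
  have hhA : h ≤ A + 1 := by exact_mod_cast (by linarith : (h : ℝ) ≤ A + 1)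
  have hfac : (0 : ℝ) < h.factorial := by positivity
  refine Nat.floor_le_of_le ((mul_le_mul_iff_of_pos_left hfac).1 ?_)
  calc (h.factorial : ℝ) * (ρ * x ^ h) = (h.factorial * ρ) * x ^ h := by ring
    _ ≤ d ^ h * x ^ h := by gcongr
    _ = (d * x) ^ h := by ring
    _ ≤ ((A + 1 - h : ℕ) : ℝ) ^ h := by gcongr; rw [Nat.cast_sub hhA]; push_cast; linarith
    _ ≤ h.factorial * A.choose h := (div_le_iff₀' hfac).1 (Nat.pow_le_choose h A)

theorem tendsto_qGCtd_one {h c : ℕ} (hh : h ≠ 0) {ρ : ℝ} (hρ : 0 ≤ ρ)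
    (hp : Tendsto (fun n : ℕ => pSat c n ⌊ρ * n⌋₊) atTop (nhds 1)) :
    Tendsto (fun E : ℕ => qGCtd h c ⌊ρ ^ (h⁻¹ : ℝ) / 2 * (E : ℝ) ^ (h⁻¹ : ℝ)⌋₊ E)
      atTop (nhds 1) := by
  refine tendsto_of_tendsto_of_tendsto_of_le_of_le hp tendsto_const_nhds (fun E => ?_)
    (fun E => qGCtd_le_one _ _ _ _)
  have hcard := card_hLitSet_floor_le h (c := ρ ^ (h⁻¹ : ℝ) / 2) (x := (E : ℝ) ^ (h⁻¹ : ℝ))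
    (by positivity) (by positivity)
  rw [mul_div_cancel₀ _ two_ne_zero, Real.rpow_inv_natCast_pow hρ hh,
    Real.rpow_inv_natCast_pow E.cast_nonneg hh] at hcard
  exact (pSat_antitone _ _ hcard).trans (pSat_card_hLitSet_le_qGCtd _ _ _ _)

theorem tendsto_qGCtd_zero {h c : ℕ} (hh : h ≠ 0) {ρ : ℝ} (hρ : 0 ≤ ρ)
    (hp : Tendsto (fun n : ℕ => pSat c n ⌊ρ * n⌋₊) atTop (nhds 0)) :
    Tendsto (fun E : ℕ =>
        qGCtd h c ⌊(h + (h.factorial * ρ) ^ (h⁻¹ : ℝ)) * (E : ℝ) ^ (h⁻¹ : ℝ)⌋₊ E)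
      atTop (nhds 0) := by
  refine tendsto_of_tendsto_of_tendsto_of_le_of_le' tendsto_const_nhds hp
    (Eventually.of_forall fun E => qGCtd_nonneg _ _ _ _) ?_
  filter_upwards [eventually_ge_atTop 1] with E hE
  have hchoose := floor_le_choose_floor (ρ := ρ) (x := (E : ℝ) ^ (h⁻¹ : ℝ)) (by positivity)
    (Real.rpow_inv_natCast_pow (by positivity) hh).ge
    (Real.one_le_rpow (mod_cast hE) (by positivity))
  rw [Real.rpow_inv_natCast_pow E.cast_nonneg hh] at hchoose
  exact (qGCtd_le_pSat_choose _ _ _ _).trans (pSat_antitone _ _ hchoose)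

theorem stmt_12_general (k h : ℕ) (hh : 1 ≤ h)
    (hyp1 : ∃ ρ : ℝ, 0 < ρ ∧
      Tendsto (fun n : ℕ => pSat (k - h) n ⌊ρ * (n : ℝ)⌋₊) atTop (nhds 1))
    (hyp0 : ∃ ρ' : ℝ, 0 < ρ' ∧
      Tendsto (fun n : ℕ => pSat (k - h) n ⌊ρ' * (n : ℝ)⌋₊) atTop (nhds 0)) :
    (∃ s : ℝ, 0 < s ∧
      Tendsto (fun E : ℕ =>
          qGCtd h (k - h) ⌊s * (E : ℝ) ^ ((1 : ℝ) / (h : ℝ))⌋₊ E)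
        atTop (nhds 1)) ∧
    (∃ r : ℝ, 0 < r ∧
      Tendsto (fun E : ℕ =>
          qGCtd h (k - h) ⌊r * (E : ℝ) ^ ((1 : ℝ) / (h : ℝ))⌋₊ E)
        atTop (nhds 0)) := by
  have hh0 : h ≠ 0 := Nat.one_le_iff_ne_zero.mp hh
  obtain ⟨ρ, hρ, hp1⟩ := hyp1
  obtain ⟨ρ', hρ', hp0⟩ := hyp0
  simp only [one_div]
  exact ⟨⟨_, by positivity, tendsto_qGCtd_one hh0 hρ.le hp1⟩,
    ⟨_, by positivity, tendsto_qGCtd_zero hh0 hρ'.le hp0⟩⟩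

/-- fix `1 ≤ h < k`; if there is `ρ > 0` with
`lim_{n→∞} p(k−h,n,⌊ρn⌋) = 1` and there is `ρ' > 0` with
`lim_{n→∞} p(k−h,n,⌊ρ'n⌋) = 0`, then there are reals `s > 0` and `r > 0` with
`lim_{E→∞} q^gctd(h,k−h,⌊s·E^{1/h}⌋,E) = 1` and
`lim_{E→∞} q^gctd(h,k−h,⌊r·E^{1/h}⌋,E) = 0`. -/
theorem stmt_12 (k h : ℕ) (hh : 1 ≤ h) (hhk : h < k)
    (hyp1 : ∃ ρ : ℝ, 0 < ρ ∧
      Tendsto (fun n : ℕ => pSat (k - h) n ⌊ρ * (n : ℝ)⌋₊) atTop (nhds 1))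
    (hyp0 : ∃ ρ' : ℝ, 0 < ρ' ∧
      Tendsto (fun n : ℕ => pSat (k - h) n ⌊ρ' * (n : ℝ)⌋₊) atTop (nhds 0)) :
    (∃ s : ℝ, 0 < s ∧
      Tendsto (fun E : ℕ =>
          qGCtd h (k - h) ⌊s * (E : ℝ) ^ ((1 : ℝ) / (h : ℝ))⌋₊ E)
        atTop (nhds 1)) ∧
    (∃ r : ℝ, 0 < r ∧
      Tendsto (fun E : ℕ =>
          qGCtd h (k - h) ⌊r * (E : ℝ) ^ ((1 : ℝ) / (h : ℝ))⌋₊ E)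
        atTop (nhds 0)) :=
  stmt_12_general k h hh hyp1 hyp0
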